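/- Suppose the inequality ‖T_0f‖_{L^{q_0}} ≤ A‖f‖_{L^{p_0}} holds with p_0 = (d+1)/d, q_0 = d+1, and the pointwise bounds T(υ_*) ≤ C υ^{1/d} hold. Then for every t ∈ [0,1] and every nonnegative f, (∫ (Tf)^{q_t} υ^{-t q_t/d})^{1/q_t} ≤ C' (∫ f^{p_t} υ_*^{-t p_t})^{1/p_t}, where p_t^{-1} = (1-t)/p_0 and q_t^{-1} = (1-t)/q_0, with C' independent of t. -/

import Mathlib

/-!
Instead of complex interpolation, Hölder's inequality inside the integral defining `T` does the
job. Writing `f = g υ_*^t` with `g = f υ_*^{-t}` and `h = g^{1/(1-t)}`, one gets pointwise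
`Tf ≤ (Th)^{1-t} (Tυ_*)^t ≤ C^t υ^{t/d} (Th)^{1-t}`, so the weight `υ^{-t/d}` cancels. The
`L^{q_t}` norm of `(Th)^{1-t}` is the `(1-t)`-th power of the `L^{q_0}` norm of `Th`, and the
`L^{p_0}` norm of `h` raised to `1-t` is the `L^{p_t}` norm of `g`; the unweighted bound then gives
the claim with constant `C^t A^{1-t}`. At `t = 1` the bound `|f| ≤ ‖f υ_*^{-1}‖_∞ υ_*` holds only
almost everywhere, but null sets pull back to null sets under `(x, τ) ↦ x - (τ, |τ|²)`, so it
survives integration along the paraboloids defining `T`.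
-/

open MeasureTheory

/-- Points of ℝ^d written as `(x', x_d) ∈ ℝ^{d-1} × ℝ`. -/
abbrev Pt (d : ℕ) := EuclideanSpace ℝ (Fin (d - 1)) × ℝ

/-- `Tf(x) = ∫_{ℝ^{d-1}} f(x'-t, x_d - |t|²) dt`. -/
noncomputable def Tconv (d : ℕ) (f : Pt d → ℝ) (x : Pt d) : ℝ :=
  ∫ t : EuclideanSpace ℝ (Fin (d - 1)), f (x.1 - t, x.2 - ‖t‖ ^ 2)

/-- `T` on nonnegative measurable functions (lower integral version). -/
noncomputable def Tlin (d : ℕ) (f : Pt d → ENNReal) (x : Pt d) : ENNReal :=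
  ∫⁻ t : EuclideanSpace ℝ (Fin (d - 1)), f (x.1 - t, x.2 - ‖t‖ ^ 2)

/-- `υ(x) = min(1, |x'|^{-d}, |x_d - |x'|²|^{-d}) = (max(1, |x'|^d, |x_d - |x'|²|^d))⁻¹`. -/
noncomputable def upsR (d : ℕ) (x : Pt d) : ℝ :=
  (max 1 (max (‖x.1‖ ^ d) (|x.2 - ‖x.1‖ ^ 2| ^ d)))⁻¹

/-- `υ_*(x) = min(1, |x'|^{-d}, |x_d + |x'|²|^{-d}) = (max(1, |x'|^d, |x_d + |x'|²|^d))⁻¹`. -/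
noncomputable def upsStarR (d : ℕ) (x : Pt d) : ℝ :=
  (max 1 (max (‖x.1‖ ^ d) (|x.2 + ‖x.1‖ ^ 2| ^ d)))⁻¹

/-- The exponent `p_t` with `p_t⁻¹ = (1-t)/p_0`, `p_0 = (d+1)/d`; `∞` when `t = 1`. -/
noncomputable def pexp (d : ℕ) (t : ℝ) : ENNReal :=
  ENNReal.ofReal ((d : ℝ) + 1) / ENNReal.ofReal ((d : ℝ) * (1 - t))

/-- The exponent `q_t` with `q_t⁻¹ = (1-t)/q_0`, `q_0 = d+1`; `∞` when `t = 1`. -/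
noncomputable def qexp (d : ℕ) (t : ℝ) : ENNReal :=
  ENNReal.ofReal ((d : ℝ) + 1) / ENNReal.ofReal (1 - t)

open ENNReal NNReal

theorem ae_ae_sub_of_ae {G E : Type*} [MeasurableSpace G] [AddGroup G] [MeasurableAdd G]
    [MeasurableSub₂ G] {μ : Measure G} [μ.IsAddRightInvariant] [SFinite μ]
    [MeasurableSpace E] {ν : Measure E} [SFinite ν] {φ : E → G} (hφ : Measurable φ)
    {P : G → Prop} (h : ∀ᵐ y ∂μ, P y) : ∀ᵐ x ∂μ, ∀ᵐ τ ∂ν, P (x - φ τ) := by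
  have hqmp : Measure.QuasiMeasurePreserving (fun z : G × E => z.1 - φ z.2) (μ.prod ν) μ :=
    QuasiMeasurePreserving.prod_of_left (measurable_fst.sub (hφ.comp measurable_snd)) <|
      .of_forall fun τ => (measurePreserving_sub_right μ (φ τ)).quasiMeasurePreserving
  exact Measure.ae_ae_of_ae_prod (hqmp.ae h)

theorem eLpNorm_iSup_le {α : Type*} [MeasurableSpace α] {μ : Measure α} {p : ℝ≥0∞}
    (hp : p ≠ ∞) {F : ℕ → α → ℝ≥0∞} (hF : ∀ n, AEMeasurable (F n) μ) (hmono : Monotone F)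
    {c : ℝ≥0∞} (hc : ∀ n, eLpNorm (F n) p μ ≤ c) :
    eLpNorm (fun x => ⨆ n, F n x) p μ ≤ c := by
  rcases eq_or_ne p 0 with rfl | hp0
  · simp
  have hr : 0 < p.toReal := ENNReal.toReal_pos hp0 hp
  simp only [eLpNorm_eq_lintegral_rpow_enorm_toReal hp0 hp, enorm_eq_self,
    one_div, ENNReal.rpow_inv_le_iff hr] at hc ⊢
  calc ∫⁻ x, (⨆ n, F n x) ^ p.toReal ∂μ = ∫⁻ x, ⨆ n, F n x ^ p.toReal ∂μ :=
        lintegral_congr fun x => (ENNReal.orderIsoRpow p.toReal hr).map_iSup _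
    _ = ⨆ n, ∫⁻ x, F n x ^ p.toReal ∂μ :=
        lintegral_iSup' (fun n => (hF n).pow_const _)
          (.of_forall fun x m n hmn => ENNReal.rpow_le_rpow (hmono hmn x) hr.le)
    _ ≤ c ^ p.toReal := iSup_le hc

theorem iSup_indicator_closedBall_min {X : Type*} [SeminormedAddCommGroup X] (u : X → ℝ≥0∞)
    (y : X) : ⨆ n : ℕ, (Metric.closedBall 0 n).indicator (fun y => min (u y) n) y = u y := by
  refine le_antisymm (iSup_le fun n => ?_) (le_of_forall_lt fun b hb => ?_)
  · exact (Set.indicator_le_self _ _ y).trans (min_le_left _ _)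
  · obtain ⟨n, hn⟩ := exists_nat_gt (max ‖y‖ b.toReal)
    refine (lt_min hb (?_ : b < n)).trans_le (le_iSup_of_le n ?_)
    · rw [← ENNReal.ofReal_natCast, ENNReal.lt_ofReal_iff_toReal_lt hb.ne_top]
      exact (le_max_right _ _).trans_lt hn
    · rw [Set.indicator_of_mem (by simpa using (le_max_left _ _).trans hn.le)]

theorem enorm_mul_rpow (a : ℝ) {b : ℝ} (hb : 0 < b) (r : ℝ) :
    ‖a * b ^ r‖ₑ = ‖a‖ₑ * ENNReal.ofReal b ^ r := by
  rw [enorm_mul, Real.enorm_of_nonneg (Real.rpow_nonneg hb.le r), ENNReal.ofReal_rpow_of_pos hb]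

theorem ofReal_rpow_mul_rpow_neg {b : ℝ} (hb : 0 < b) (r : ℝ) :
    ENNReal.ofReal b ^ r * ENNReal.ofReal b ^ (-r) = 1 := by
  rw [← ENNReal.rpow_add _ _ (ENNReal.ofReal_pos.2 hb).ne' ofReal_ne_top, add_neg_cancel,
    ENNReal.rpow_zero]

theorem enorm_mul_rpow_neg_mul_rpow (a : ℝ) {b : ℝ} (hb : 0 < b) (t : ℝ) :
    ‖a * b ^ (-t)‖ₑ * ENNReal.ofReal b ^ t = ‖a‖ₑ := by
  rw [enorm_mul_rpow a hb, mul_assoc, mul_comm (_ ^ (-t)), ofReal_rpow_mul_rpow_neg hb, mul_one]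

theorem upsR_pos (d : ℕ) (x : Pt d) : 0 < upsR d x :=
  inv_pos.2 (one_pos.trans_le (le_max_left _ _))

theorem upsStarR_pos (d : ℕ) (x : Pt d) : 0 < upsStarR d x :=
  inv_pos.2 (one_pos.trans_le (le_max_left _ _))

theorem measurable_upsStarR (d : ℕ) : Measurable (upsStarR d) := by
  unfold upsStarR; fun_prop

theorem qexp_one (d : ℕ) : qexp d 1 = ∞ := by
  rw [qexp, sub_self, ENNReal.ofReal_zero, ENNReal.div_zero (by positivity)]

theorem pexp_one (d : ℕ) : pexp d 1 = ∞ := by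
  rw [pexp, sub_self, mul_zero, ENNReal.ofReal_zero, ENNReal.div_zero (by positivity)]

theorem qexp_eq_div (d : ℕ) (t : ℝ) : qexp d t = qexp d 0 / ENNReal.ofReal (1 - t) := by
  rw [qexp, qexp, sub_zero, ENNReal.ofReal_one, div_one]

theorem pexp_eq_div (d : ℕ) (t : ℝ) : pexp d t = pexp d 0 / ENNReal.ofReal (1 - t) := by
  rw [pexp, pexp, sub_zero, mul_one, ENNReal.ofReal_mul (Nat.cast_nonneg d), div_eq_mul_inv,
    div_eq_mul_inv, div_eq_mul_inv, ENNReal.mul_inv (.inr ofReal_ne_top) (.inl ofReal_ne_top),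
    mul_assoc]

instance (d : ℕ) : (volume : Measure (Pt d)).IsAddRightInvariant := by
  rw [Measure.volume_eq_prod]; infer_instance

variable {d : ℕ}

theorem measurable_paraboloid_sub (x : Pt d) :
    Measurable fun τ : EuclideanSpace ℝ (Fin (d - 1)) => ((x.1 - τ, x.2 - ‖τ‖ ^ 2) : Pt d) :=
  (measurable_const.sub measurable_id).prodMk (measurable_const.sub (measurable_norm.pow_const 2))

theorem measurable_Tlin {u : Pt d → ℝ≥0∞} (hu : Measurable u) : Measurable (Tlin d u) :=
  (hu.comp (measurable_fst.sub (measurable_snd.prodMk (measurable_snd.norm.pow_const 2))))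
    |>.lintegral_prod_right'

theorem Tlin_lt_top {u : Pt d → ℝ≥0∞} {R : ℝ} {c : ℝ≥0∞} (hc : c ≠ ∞)
    (hu : ∀ y, u y ≤ (Metric.closedBall 0 R).indicator (fun _ => c) y) (x : Pt d) :
    Tlin d u x < ∞ := by
  have hslice : ∀ τ,
      u (x.1 - τ, x.2 - ‖τ‖ ^ 2) ≤ (Metric.closedBall x.1 R).indicator (fun _ => c) τ := by
    intro τ
    refine (hu _).trans ?_
    classical
    simp only [Set.indicator_apply, Metric.mem_closedBall, dist_zero_right]
    split_ifs with h₁ h₂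
    · exact le_rfl
    · exact absurd ((dist_comm _ _).trans_le ((norm_fst_le _).trans h₁)) h₂
    all_goals exact zero_le
  calc Tlin d u x ≤ ∫⁻ τ, (Metric.closedBall x.1 R).indicator (fun _ => c) τ :=
        lintegral_mono hslice
    _ < ∞ := by
      rw [lintegral_indicator_const measurableSet_closedBall]
      exact ENNReal.mul_lt_top hc.lt_top measure_closedBall_lt_top

theorem Tconv_toReal {u : Pt d → ℝ≥0∞} (hu : Measurable u) (hfin : ∀ y, u y ≠ ∞) (x : Pt d) :
    Tconv d (fun y => (u y).toReal) x = (Tlin d u x).toReal :=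
  integral_toReal (hu.comp (measurable_paraboloid_sub x)).aemeasurable
    (.of_forall fun _ => (hfin _).lt_top)

theorem enorm_Tconv_le (f : Pt d → ℝ) (x : Pt d) : ‖Tconv d f x‖ₑ ≤ Tlin d (‖f ·‖ₑ) x :=
  enorm_integral_le_lintegral_enorm _

theorem Tlin_rpow_mul_rpow_le {u w : Pt d → ℝ≥0∞} (hu : Measurable u) (hw : Measurable w)
    {s t : ℝ} (hs : 0 ≤ s) (ht : 0 ≤ t) (hst : s + t = 1) (x : Pt d) :
    Tlin d (fun y => u y ^ s * w y ^ t) x ≤ Tlin d u x ^ s * Tlin d w x ^ t :=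
  ENNReal.lintegral_mul_norm_pow_le (hu.comp (measurable_paraboloid_sub x)).aemeasurable
    (hw.comp (measurable_paraboloid_sub x)).aemeasurable hs ht hst

theorem eLpNorm_Tlin_le_of_eLpNorm_Tconv_le {p q : ℝ≥0∞} (hq : q ≠ ∞) {K : ℝ≥0∞}
    (hK : ∀ f : Pt d → ℝ, eLpNorm (Tconv d f) q volume ≤ K * eLpNorm f p volume)
    {u : Pt d → ℝ≥0∞} (hu : Measurable u) :
    eLpNorm (Tlin d u) q volume ≤ K * eLpNorm u p volume := by
  -- `hK` only sees the Bochner integral `Tconv`, which is junk (`0`) where `Tlin` is infinite: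
  -- apply it to bounded truncations with bounded support, where the two agree.
  set v : ℕ → Pt d → ℝ≥0∞ := fun n => (Metric.closedBall 0 n).indicator (fun y => min (u y) n)
  have hv : ∀ n, Measurable (v n) := fun n =>
    (hu.min measurable_const).indicator measurableSet_closedBall
  have hv_le : ∀ n y, v n y ≤ (Metric.closedBall 0 n).indicator (fun _ => (n : ℝ≥0∞)) y :=
    fun n y => Set.indicator_le_indicator (min_le_right _ _)
  have hv_fin : ∀ n y, v n y ≠ ∞ := fun n y =>
    ((hv_le n y).trans (Set.indicator_le_self' (fun _ _ => zero_le) y)).trans_lt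
      (natCast_lt_top n) |>.ne
  have hv_mono : Monotone v := fun m n hmn y =>
    (Set.indicator_le_indicator (f := fun y => min (u y) m) (g := fun y => min (u y) n)
      (min_le_min_left (u y) (Nat.cast_le.2 hmn))).trans
      (Set.indicator_le_indicator_of_subset
        (Metric.closedBall_subset_closedBall (Nat.cast_le.2 hmn)) (fun _ => zero_le) y)
  have hTlin : Tlin d u = fun x => ⨆ n, Tlin d (v n) x := by
    funext x
    calc Tlin d u x = ∫⁻ τ, ⨆ n, v n (x.1 - τ, x.2 - ‖τ‖ ^ 2) := by
          simp only [v, iSup_indicator_closedBall_min]; rfl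
      _ = _ := lintegral_iSup (fun n => (hv n).comp (measurable_paraboloid_sub x))
          (fun m n hmn τ => hv_mono hmn _)
  rw [hTlin]
  refine eLpNorm_iSup_le hq (fun n => (measurable_Tlin (hv n)).aemeasurable)
    (fun m n hmn x => lintegral_mono fun τ => hv_mono hmn _) fun n => ?_
  calc eLpNorm (Tlin d (v n)) q volume = eLpNorm (Tconv d fun y => (v n y).toReal) q volume :=
        eLpNorm_congr_enorm_ae <| .of_forall fun x => by
          rw [Tconv_toReal (hv n) (hv_fin n),
            Real.enorm_toReal (Tlin_lt_top (natCast_ne_top n) (hv_le n) x).ne, enorm_eq_self]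
    _ ≤ K * eLpNorm (fun y => (v n y).toReal) p volume := hK _
    _ ≤ K * eLpNorm u p volume := by
        gcongr
        refine eLpNorm_mono_enorm fun y => ?_
        rw [Real.enorm_toReal (hv_fin n y), enorm_eq_self]
        exact (Set.indicator_le_self _ _ y).trans (min_le_left _ _)

theorem enorm_Tconv_mul_upsR_rpow_le (f : Pt d → ℝ) (x : Pt d) (r : ℝ) :
    ‖Tconv d f x * upsR d x ^ r‖ₑ ≤ Tlin d (‖f ·‖ₑ) x * ENNReal.ofReal (upsR d x) ^ r := by
  rw [enorm_mul_rpow _ (upsR_pos d x)]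
  gcongr
  exact enorm_Tconv_le f x

theorem enorm_Tconv_mul_upsR_rpow_le_of_lt_one {B : ℝ≥0}
    (hB : ∀ x, Tlin d (fun y => ENNReal.ofReal (upsStarR d y)) x ≤
      B * ENNReal.ofReal (upsR d x) ^ ((1 : ℝ) / d))
    {t : ℝ} (ht0 : 0 ≤ t) (ht1 : t < 1) {f : Pt d → ℝ} (hf : Measurable f) (x : Pt d) :
    ‖Tconv d f x * upsR d x ^ (-(t / d))‖ₑ ≤
      B ^ t * Tlin d (fun y => ‖f y * upsStarR d y ^ (-t)‖ₑ ^ (1 - t)⁻¹) x ^ (1 - t) := by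
  have hs : 1 - t ≠ 0 := (sub_pos.2 ht1).ne'
  set u : Pt d → ℝ≥0∞ := fun y => ‖f y * upsStarR d y ^ (-t)‖ₑ ^ (1 - t)⁻¹
  have hu : Measurable u :=
    ((hf.mul ((measurable_upsStarR d).pow_const _)).enorm).pow_const _
  have hf_eq : (‖f ·‖ₑ) = fun y => u y ^ (1 - t) * ENNReal.ofReal (upsStarR d y) ^ t := by
    funext y
    rw [ENNReal.rpow_inv_rpow hs, enorm_mul_rpow_neg_mul_rpow _ (upsStarR_pos d y)]
  set W := ENNReal.ofReal (upsR d x)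
  calc ‖Tconv d f x * upsR d x ^ (-(t / d))‖ₑ ≤ Tlin d (‖f ·‖ₑ) x * W ^ (-(t / d)) :=
        enorm_Tconv_mul_upsR_rpow_le f x _
    _ ≤ Tlin d u x ^ (1 - t) * Tlin d (fun y => ENNReal.ofReal (upsStarR d y)) x ^ t *
          W ^ (-(t / d)) := by
        rw [hf_eq]
        gcongr
        exact Tlin_rpow_mul_rpow_le hu (measurable_upsStarR d).ennreal_ofReal
          (sub_nonneg.2 ht1.le) ht0 (sub_add_cancel 1 t) x
    _ ≤ Tlin d u x ^ (1 - t) * (B * W ^ ((1 : ℝ) / d)) ^ t * W ^ (-(t / d)) := by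
        gcongr
        exact hB x
    _ = B ^ t * Tlin d u x ^ (1 - t) := by
        rw [ENNReal.mul_rpow_of_nonneg _ _ ht0, ← ENNReal.rpow_mul, one_div_mul_eq_div,
          mul_assoc, mul_assoc, ofReal_rpow_mul_rpow_neg (upsR_pos d x), mul_one, mul_comm]

theorem eLpNorm_Tconv_mul_upsR_rpow_le_of_lt_one {p q : ℝ≥0∞} {K B : ℝ≥0}
    (hK : ∀ u : Pt d → ℝ≥0∞, Measurable u →
      eLpNorm (Tlin d u) q volume ≤ K * eLpNorm u p volume)
    (hB : ∀ x, Tlin d (fun y => ENNReal.ofReal (upsStarR d y)) x ≤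
      B * ENNReal.ofReal (upsR d x) ^ ((1 : ℝ) / d))
    {t : ℝ} (ht0 : 0 ≤ t) (ht1 : t < 1) {f : Pt d → ℝ} (hf : Measurable f) :
    eLpNorm (fun x => Tconv d f x * upsR d x ^ (-(t / d))) (q / ENNReal.ofReal (1 - t))
        volume ≤ ↑(B ^ t * K ^ (1 - t)) *
        eLpNorm (fun x => f x * upsStarR d x ^ (-t)) (p / ENNReal.ofReal (1 - t)) volume := by
  have hs : 0 < 1 - t := sub_pos.2 ht1
  set g : Pt d → ℝ := fun y => f y * upsStarR d y ^ (-t)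
  have hu : Measurable fun y => ‖g y‖ₑ ^ (1 - t)⁻¹ :=
    ((hf.mul ((measurable_upsStarR d).pow_const _)).enorm).pow_const _
  calc eLpNorm (fun x => Tconv d f x * upsR d x ^ (-(t / d))) (q / ENNReal.ofReal (1 - t))
        volume
      ≤ (B ^ t) • eLpNorm (fun x => Tlin d (fun y => ‖g y‖ₑ ^ (1 - t)⁻¹) x ^ (1 - t))
          (q / ENNReal.ofReal (1 - t)) volume := by
        refine eLpNorm_le_nnreal_smul_eLpNorm_of_ae_le_mul' (.of_forall fun x => ?_) _
        rw [enorm_eq_self, ENNReal.coe_rpow_of_nonneg _ ht0]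
        exact enorm_Tconv_mul_upsR_rpow_le_of_lt_one hB ht0 ht1 hf x
    _ = B ^ t * eLpNorm (Tlin d (fun y => ‖g y‖ₑ ^ (1 - t)⁻¹)) q volume ^ (1 - t) := by
        have := eLpNorm_enorm_rpow (Tlin d (fun y => ‖g y‖ₑ ^ (1 - t)⁻¹))
          (p := q / ENNReal.ofReal (1 - t)) (μ := volume) hs
        simp only [enorm_eq_self] at this
        rw [ENNReal.smul_def, smul_eq_mul, this,
          ENNReal.div_mul_cancel (ENNReal.ofReal_pos.2 hs).ne' ofReal_ne_top,
          ENNReal.coe_rpow_of_nonneg _ ht0]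
    _ ≤ B ^ t * (K * eLpNorm (fun y => ‖g y‖ₑ ^ (1 - t)⁻¹) p volume) ^ (1 - t) := by
        gcongr
        exact hK _ hu
    _ = ↑(B ^ t * K ^ (1 - t)) * eLpNorm g (p / ENNReal.ofReal (1 - t)) volume := by
        rw [eLpNorm_enorm_rpow _ (inv_pos.2 hs), ENNReal.mul_rpow_of_nonneg _ _ hs.le,
          ENNReal.rpow_inv_rpow hs.ne', ENNReal.ofReal_inv_of_pos hs, ← div_eq_mul_inv,
          ENNReal.coe_mul, ENNReal.coe_rpow_of_nonneg _ ht0, ENNReal.coe_rpow_of_nonneg _ hs.le,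
          mul_assoc]

theorem eLpNorm_Tconv_mul_upsR_rpow_le_at_one {B : ℝ≥0}
    (hB : ∀ x, Tlin d (fun y => ENNReal.ofReal (upsStarR d y)) x ≤
      B * ENNReal.ofReal (upsR d x) ^ ((1 : ℝ) / d))
    (f : Pt d → ℝ) :
    eLpNorm (fun x => Tconv d f x * upsR d x ^ (-(1 / d : ℝ))) ∞ volume ≤
      B * eLpNorm (fun x => f x * upsStarR d x ^ (-1 : ℝ)) ∞ volume := by
  rw [eLpNorm_exponent_top, eLpNorm_exponent_top]
  set M := eLpNormEssSup (fun x => f x * upsStarR d x ^ (-1 : ℝ)) volume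
  have hfM : ∀ᵐ y ∂(volume : Measure (Pt d)), ‖f y‖ₑ ≤ M * ENNReal.ofReal (upsStarR d y) := by
    filter_upwards [ae_le_eLpNormEssSup (f := fun x => f x * upsStarR d x ^ (-1 : ℝ))] with y hy
    rw [← enorm_mul_rpow_neg_mul_rpow (f y) (upsStarR_pos d y) 1, ENNReal.rpow_one]
    gcongr
  have hT : ∀ᵐ x ∂(volume : Measure (Pt d)),
      Tlin d (‖f ·‖ₑ) x ≤ M * (B * ENNReal.ofReal (upsR d x) ^ ((1 : ℝ) / d)) := by
    filter_upwards [ae_ae_sub_of_ae (ν := volume)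
      (measurable_id.prodMk (measurable_norm.pow_const 2)) hfM] with x hx
    calc Tlin d (‖f ·‖ₑ) x
        ≤ ∫⁻ τ, M * ENNReal.ofReal (upsStarR d (x.1 - τ, x.2 - ‖τ‖ ^ 2)) :=
          lintegral_mono_ae hx
      _ = M * Tlin d (fun y => ENNReal.ofReal (upsStarR d y)) x :=
          lintegral_const_mul _
            ((measurable_upsStarR d).ennreal_ofReal.comp (measurable_paraboloid_sub x))
      _ ≤ M * (B * ENNReal.ofReal (upsR d x) ^ ((1 : ℝ) / d)) := by gcongr; exact hB x
  refine eLpNormEssSup_le_of_ae_enorm_bound ?_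
  filter_upwards [hT] with x hx
  calc ‖Tconv d f x * upsR d x ^ (-(1 / d : ℝ))‖ₑ
      ≤ Tlin d (‖f ·‖ₑ) x * ENNReal.ofReal (upsR d x) ^ (-(1 / d : ℝ)) :=
        enorm_Tconv_mul_upsR_rpow_le f x _
    _ ≤ M * (B * ENNReal.ofReal (upsR d x) ^ ((1 : ℝ) / d)) *
          ENNReal.ofReal (upsR d x) ^ (-(1 / d : ℝ)) := by gcongr
    _ = B * M := by
        rw [mul_assoc, mul_assoc, ofReal_rpow_mul_rpow_neg (upsR_pos d x), mul_one, mul_comm]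

theorem eLpNorm_Tconv_mul_upsR_rpow_le {K B : ℝ≥0}
    (hK : ∀ u : Pt d → ℝ≥0∞, Measurable u →
      eLpNorm (Tlin d u) (qexp d 0) volume ≤ K * eLpNorm u (pexp d 0) volume)
    (hB : ∀ x, Tlin d (fun y => ENNReal.ofReal (upsStarR d y)) x ≤
      B * ENNReal.ofReal (upsR d x) ^ ((1 : ℝ) / d))
    {t : ℝ} (ht : t ∈ Set.Icc (0 : ℝ) 1) {f : Pt d → ℝ} (hf : Measurable f) :
    eLpNorm (fun x => Tconv d f x * upsR d x ^ (-(t / d))) (qexp d t) volume ≤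
      ↑(B ^ t * K ^ (1 - t)) *
        eLpNorm (fun x => f x * upsStarR d x ^ (-t)) (pexp d t) volume := by
  rcases ht.2.lt_or_eq with ht1 | rfl
  · rw [qexp_eq_div, pexp_eq_div]
    exact eLpNorm_Tconv_mul_upsR_rpow_le_of_lt_one hK hB ht.1 ht1 hf
  · simpa [qexp_one, pexp_one] using eLpNorm_Tconv_mul_upsR_rpow_le_at_one hB f

theorem weighted_inequalities_for_T_general (d : ℕ)
    (A : ENNReal) (hA' : A < ⊤)
    (hA : ∀ f : Pt d → ℝ,
      eLpNorm (Tconv d f) (qexp d 0) volume ≤ A * eLpNorm f (pexp d 0) volume)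
    (C : ℝ)
    (hpt : ∀ x : Pt d, Tlin d (fun y => ENNReal.ofReal (upsStarR d y)) x ≤
      ENNReal.ofReal (C * (upsR d x) ^ ((1 : ℝ) / d))) :
    ∃ C' : ENNReal, C' < ⊤ ∧ ∀ t ∈ Set.Icc (0 : ℝ) 1, ∀ f : Pt d → ℝ,
      Measurable f → (∀ x, 0 ≤ f x) →
      eLpNorm (fun x => Tconv d f x * (upsR d x) ^ (-(t / d))) (qexp d t) volume ≤
        C' * eLpNorm (fun x => f x * (upsStarR d x) ^ (-t)) (pexp d t) volume := by
  set K : ℝ≥0 := max A.toNNReal 1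
  set B : ℝ≥0 := max C.toNNReal 1
  have hK : ∀ u : Pt d → ℝ≥0∞, Measurable u →
      eLpNorm (Tlin d u) (qexp d 0) volume ≤ K * eLpNorm u (pexp d 0) volume := by
    refine fun u =>
      eLpNorm_Tlin_le_of_eLpNorm_Tconv_le (by simp [qexp]) fun f => (hA f).trans ?_
    gcongr
    rw [← ENNReal.coe_toNNReal hA'.ne, ENNReal.coe_le_coe]
    exact le_max_left _ _
  have hB : ∀ x, Tlin d (fun y => ENNReal.ofReal (upsStarR d y)) x ≤
      B * ENNReal.ofReal (upsR d x) ^ ((1 : ℝ) / d) := by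
    intro x
    refine (hpt x).trans ?_
    rw [ENNReal.ofReal_mul' (Real.rpow_nonneg (upsR_pos d x).le _),
      ENNReal.ofReal_rpow_of_pos (upsR_pos d x)]
    gcongr
    exact ENNReal.coe_le_coe.2 (le_max_left _ _)
  refine ⟨K * B, ENNReal.coe_lt_top, fun t ht f hf _ =>
    (eLpNorm_Tconv_mul_upsR_rpow_le hK hB ht hf).trans ?_⟩
  gcongr
  rw [← ENNReal.coe_mul, ENNReal.coe_le_coe, mul_comm K]
  gcongr
  · exact (NNReal.rpow_le_rpow_of_exponent_le (le_max_right _ _) ht.2).trans_eq (NNReal.rpow_one B)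
  · exact (NNReal.rpow_le_rpow_of_exponent_le (le_max_right _ _) (by linarith [ht.1])).trans_eq
      (NNReal.rpow_one K)

/-- Weighted inequalities for `T` by complex interpolation: assuming the unweighted
`L^{p_0} → L^{q_0}` bound and the pointwise bound `T(υ_*) ≤ C υ^{1/d}`, for every
`t ∈ [0,1]` and every nonnegative `f`,
`(∫ (Tf)^{q_t} υ^{-t q_t/d})^{1/q_t} ≤ C' (∫ f^{p_t} υ_*^{-t p_t})^{1/p_t}`,
with `C'` independent of `t`. -/
theorem weighted_inequalities_for_T (d : ℕ) (hd : 2 ≤ d)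
    (A : ENNReal) (hA' : A < ⊤)
    (hA : ∀ f : Pt d → ℝ,
      eLpNorm (Tconv d f) (qexp d 0) volume ≤ A * eLpNorm f (pexp d 0) volume)
    (C : ℝ)
    (hpt : ∀ x : Pt d, Tlin d (fun y => ENNReal.ofReal (upsStarR d y)) x ≤
      ENNReal.ofReal (C * (upsR d x) ^ ((1 : ℝ) / d))) :
    ∃ C' : ENNReal, C' < ⊤ ∧ ∀ t ∈ Set.Icc (0 : ℝ) 1, ∀ f : Pt d → ℝ,
      Measurable f → (∀ x, 0 ≤ f x) →
      eLpNorm (fun x => Tconv d f x * (upsR d x) ^ (-(t / d))) (qexp d t) volume ≤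
        C' * eLpNorm (fun x => f x * (upsStarR d x) ^ (-t)) (pexp d t) volume :=
  weighted_inequalities_for_T_general d A hA' hA C hpt
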